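/- The generating series of w-avoiding strings ending in u equals the generating series of w-avoiding strings beginning with v: Z_w(ε,0,u)(t) = Z_w(v,0)(t), where u is the (p-1)-prefix and v the (p-1)-suffix of w. -/

import Mathlib

open scoped BigOperators
open PowerSeries

/-- Number of (possibly overlapping) occurrences of the block `w` in `X`. -/
def occCount {α : Type*} [DecidableEq α] (w X : List α) : ℕ :=
  ((List.range X.length).filter fun i => (X.drop i).take w.length = w).length

/-- Number of strings of length `l` over `{0,…,b-1}` with exactly `k` occurrences of `w`,
starting with `x` and ending with `y` (an empty `x` or `y` imposes no constraint). -/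
def Nxy (b : ℕ) (w x y : List (Fin b)) (k l : ℕ) : ℕ :=
  Fintype.card {f : Fin l → Fin b //
    occCount w (List.ofFn f) = k ∧ x <+: List.ofFn f ∧ y <:+ List.ofFn f}

/-- The generating series `Z_w(x,k,y)(t)` as a formal power series over `ℚ`. -/
noncomputable def Zser (b : ℕ) (w x y : List (Fin b)) (k : ℕ) : PowerSeries ℚ :=
  PowerSeries.mk fun l => (Nxy b w x y k l : ℚ)

/-!
Prepending a letter to the `w`-avoiding strings of length `l` gives `b · A(l)` strings, where
`A` counts `w`-avoiding strings. Each of them either avoids `w` or begins with its only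
occurrence of `w`, and the latter are exactly the extensions of `w`-avoiding strings starting
with `v` by the first letter of `w`. Hence the `l`-th coefficient of `Z_w(v,0)` is
`b · A(l) - A(l+1)`. Reversing strings identifies `Z_w(ε,0,u)` with `Z_{w^R}(v',0)`, where
`v'` is the `(p-1)`-suffix of the reversed word `w^R`, and leaves `A` unchanged, so both
series have the same coefficients.
-/

section OccCount

variable {α : Type*} [DecidableEq α] (w : List α)

lemma occCount_cons (a : α) (X : List α) :
    occCount w (a :: X) = occCount w X + if w <+: a :: X then 1 else 0 := by
  simp only [occCount, ← List.countP_eq_length_filter, List.length_cons,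
    List.range_succ_eq_map, List.countP_cons, List.countP_map]
  congr 1
  simp [List.prefix_iff_eq_take, eq_comm]

lemma occCount_concat (X : List α) (c : α) :
    occCount w (X ++ [c]) = occCount w X + if w <:+ X ++ [c] then 1 else 0 := by
  induction X with
  | nil =>
    have h : w <+: [c] ↔ w <:+ [c] := by
      rw [List.suffix_cons_iff, ← List.nil_append [c], List.prefix_concat_iff]
      simp
    simp [occCount_cons, h]
  | cons a X ih =>
    rw [List.cons_append, occCount_cons, ih, occCount_cons]
    by_cases hw : w = a :: (X ++ [c])
    · have hsuf : ¬ w <:+ X ++ [c] := fun h => by simpa [hw] using h.length_le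
      have hpre : ¬ w <+: a :: X := fun h => by simpa [hw] using h.length_le
      have hsuf' : w <:+ a :: (X ++ [c]) := hw ▸ List.suffix_refl w
      have hpre' : w <+: a :: (X ++ [c]) := hw ▸ List.prefix_refl w
      simp only [hsuf, hpre, hsuf', hpre', if_true, if_false]
    · have hpre : w <+: a :: (X ++ [c]) ↔ w <+: a :: X := by
        rw [← List.cons_append, List.prefix_concat_iff]; exact or_iff_right hw
      have hsuf : w <:+ a :: (X ++ [c]) ↔ w <:+ X ++ [c] := by
        rw [List.suffix_cons_iff]; exact or_iff_right hw
      simp only [hpre, hsuf]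
      omega

lemma occCount_reverse (X : List α) : occCount w.reverse X.reverse = occCount w X := by
  induction X with
  | nil => rfl
  | cons a X ih =>
    have h : w.reverse <:+ X.reverse ++ [a] ↔ w <+: a :: X := by
      rw [← List.reverse_cons, List.reverse_suffix]
    simp only [List.reverse_cons, occCount_concat, ih, h, occCount_cons]

lemma occCount_eq_zero_iff_cons {d : α} {t : List α} (c : α) (X : List α) :
    occCount (d :: t) X = 0 ↔
      occCount (d :: t) (c :: X) = 0 ∨ (c = d ∧ occCount (d :: t) X = 0 ∧ t <+: X) := by
  simp only [occCount_cons, List.cons_prefix_cons]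
  by_cases h : d = c ∧ t <+: X
  · obtain ⟨rfl, ht⟩ := h
    simp [ht]
  · rw [if_neg h, add_zero, or_iff_left fun ⟨hcd, _, ht⟩ => h ⟨hcd.symm, ht⟩]

end OccCount

lemma List.ofFn_comp_rev {α : Type*} {n : ℕ} (f : Fin n → α) :
    List.ofFn (f ∘ Fin.rev) = (List.ofFn f).reverse := by
  refine List.ext_getElem (by simp) fun i h₁ _ => ?_
  simp only [List.length_ofFn] at h₁
  simp only [List.getElem_ofFn, Function.comp_apply, Fin.rev, List.getElem_reverse, List.length_ofFn]
  congr 2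
  omega

lemma Fintype.card_subtype_head_and_tail {α : Type*} [Fintype α] {l : ℕ} (Q : α → Prop)
    (P : (Fin l → α) → Prop) [DecidablePred Q] [DecidablePred P] :
    Fintype.card {g : Fin (l + 1) → α // Q (g 0) ∧ P (Fin.tail g)} =
      Fintype.card {c // Q c} * Fintype.card {f // P f} := by
  rw [← Fintype.card_prod]
  exact Fintype.card_congr <|
    (Equiv.subtypeEquiv (Fin.consEquiv fun _ => α).symm fun _ => Iff.rfl).trans
      Equiv.subtypeProdEquivProd

section Nxy

variable {b : ℕ}

lemma Nxy_reverse (w x y : List (Fin b)) (k l : ℕ) :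
    Nxy b w.reverse y.reverse x.reverse k l = Nxy b w x y k l := by
  let e : (Fin l → Fin b) ≃ (Fin l → Fin b) := Fin.revPerm.arrowCongr (.refl _)
  have he (f : Fin l → Fin b) : List.ofFn (e f) = (List.ofFn f).reverse := List.ofFn_comp_rev f
  refine (Fintype.card_congr <| e.subtypeEquiv fun f => ?_).symm
  rw [he, occCount_reverse, List.reverse_prefix, List.reverse_suffix, and_comm (a := y <:+ _)]

lemma Nxy_succ_add_Nxy_tail {w : List (Fin b)} (hw : w ≠ []) (l : ℕ) :
    Nxy b w [] [] 0 (l + 1) + Nxy b w w.tail [] 0 l = Nxy b w [] [] 0 l * b := by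
  obtain ⟨d, t, rfl⟩ := List.exists_cons_of_ne_nil hw
  simp only [Nxy, List.nil_prefix, List.nil_suffix, and_true, List.tail_cons]
  have hg (g : Fin (l + 1) → Fin b) : List.ofFn g = g 0 :: List.ofFn (Fin.tail g) :=
    List.ofFn_succ
  have hall := Fintype.card_subtype_head_and_tail (fun _ : Fin b => True)
    fun f : Fin l → Fin b => occCount (d :: t) (List.ofFn f) = 0
  have hstart := Fintype.card_subtype_head_and_tail (· = d)
    fun f : Fin l → Fin b => occCount (d :: t) (List.ofFn f) = 0 ∧ t <+: List.ofFn f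
  rw [Fintype.card_subtype_true, Fintype.card_fin] at hall
  rw [Fintype.card_subtype_eq, one_mul] at hstart
  rw [← hstart, mul_comm, ← hall, ← Fintype.card_subtype_or_disjoint]
  · refine Fintype.card_congr (Equiv.subtypeEquivRight fun g => ?_)
    rw [true_and, hg g]
    exact (occCount_eq_zero_iff_cons _ _).symm
  · refine Pi.disjoint_iff.2 fun g => Prop.disjoint_iff.2 ?_
    rintro ⟨hfree, rfl, htail, ht⟩
    rw [hg, occCount_cons, htail, if_pos (List.cons_prefix_cons.2 ⟨rfl, ht⟩)] at hfree
    exact one_ne_zero hfree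

end Nxy

theorem stmt8_general (b : ℕ) (w : List (Fin b)) (hw : 1 ≤ w.length) :
    Zser b w [] (w.take (w.length - 1)) 0 = Zser b w (w.drop 1) [] 0 := by
  have hw₀ : w ≠ [] := List.ne_nil_of_length_pos hw
  ext l
  simp only [Zser, PowerSeries.coeff_mk, Nat.cast_inj]
  have hstart := Nxy_succ_add_Nxy_tail hw₀ l
  have hend := Nxy_succ_add_Nxy_tail (List.reverse_ne_nil_iff.mpr hw₀) l
  have hfree (m : ℕ) : Nxy b w.reverse [] [] 0 m = Nxy b w [] [] 0 m := Nxy_reverse w [] [] 0 m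
  have hsuffix : Nxy b w.reverse w.dropLast.reverse [] 0 l = Nxy b w [] w.dropLast 0 l :=
    Nxy_reverse w [] w.dropLast 0 l
  rw [hfree, hfree, List.tail_reverse, hsuffix, List.dropLast_eq_take] at hend
  rw [List.drop_one]
  omega

/-- `Z_w(ε,0,u) = Z_w(v,0)`: the generating series of `w`-avoiding strings ending in the
`(p-1)`-prefix `u` of `w` equals that of `w`-avoiding strings starting with the
`(p-1)`-suffix `v` of `w`. -/
theorem stmt8 (b : ℕ) (hb : 1 < b) (w : List (Fin b)) (hw : 1 ≤ w.length) :
    Zser b w [] (w.take (w.length - 1)) 0 = Zser b w (w.drop 1) [] 0 :=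
  stmt8_general b w hw
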